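/- Let w and w' be distinct vertices of P_T for a {1,3}-tree T, with associated disjoint collections of leaf-paths H_w and H_{w'} (so w = (1/2)𝟙_{H_w}, w' = (1/2)𝟙_{H_{w'}}). Then w and w' are adjacent on the polytope P_T (joined by an edge of P_T) if and only if the symmetric difference H_w △ H_{w'} is a single leaf-path. -/

import Mathlib

open Finset
open scoped Classical

noncomputable section

/-- The Liu–Osserman polytope `P_T` of a `{1,3}`-graph, as a subset of `ℝ^{Sym2 V}`
supported on the edges of `T`: at each internal (degree-3) node with incident edges
`a, b, c` the triangle inequalities `w_a ≤ w_b + w_c` (in all three versions) and the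
perimeter inequality `w_a + w_b + w_c ≤ 1` hold, and `0 ≤ w_e ≤ 1/2` for any edge both
of whose endpoints are leaves. -/
def memP {V : Type*} [Fintype V] [DecidableEq V] (T : SimpleGraph V) [DecidableRel T.Adj]
    (w : Sym2 V → ℝ) : Prop :=
  (∀ e, e ∉ T.edgeSet → w e = 0) ∧
  (∀ v : V, T.degree v = 3 →
    (∀ a ∈ T.incidenceFinset v, w a ≤ ∑ b ∈ (T.incidenceFinset v).erase a, w b) ∧
    ∑ a ∈ T.incidenceFinset v, w a ≤ 1) ∧
  (∀ e ∈ T.edgeSet, (∀ v ∈ e, T.degree v = 1) → 0 ≤ w e ∧ w e ≤ 1 / 2)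

/-- `H` is (the edge set of) a collection of pairwise disjoint leaf-paths of the
`{1,3}`-tree `T`: a set of edges in which every internal (degree-3) node of `T` has
degree `0` or `2` (an internally Eulerian subgraph of a tree). -/
def isLeafPathCollection {V : Type*} [Fintype V] [DecidableEq V] (T : SimpleGraph V)
    [DecidableRel T.Adj] (H : Finset (Sym2 V)) : Prop :=
  H ⊆ T.edgeFinset ∧
  ∀ v : V, T.degree v = 3 →
    (H.filter (fun e => v ∈ e)).card = 0 ∨ (H.filter (fun e => v ∈ e)).card = 2

/-- The leaf-edges of `T`: edges incident to a degree-1 vertex. -/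
def leafEdges {V : Type*} [Fintype V] [DecidableEq V] (T : SimpleGraph V)
    [DecidableRel T.Adj] : Finset (Sym2 V) :=
  T.edgeFinset.filter (fun e => ∃ v ∈ e, T.degree v = 1)


/-- The point `(1/2)·𝟙_H` associated to a collection `H` of disjoint leaf-paths. -/
def halfIndicator {V : Type*} [Fintype V] [DecidableEq V] (H : Finset (Sym2 V)) :
    Sym2 V → ℝ :=
  fun e => if e ∈ H then 1 / 2 else 0

/-- `S` is (the edge set of) a single leaf-path of `T`: a nonempty collection of disjoint
leaf-paths that cannot be split into two nonempty such collections. -/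
def isSingleLeafPath {V : Type*} [Fintype V] [DecidableEq V] (T : SimpleGraph V)
    [DecidableRel T.Adj] (S : Finset (Sym2 V)) : Prop :=
  isLeafPathCollection T S ∧ S.Nonempty ∧
  ¬ ∃ A B : Finset (Sym2 V), A.Nonempty ∧ B.Nonempty ∧ Disjoint A B ∧ A ∪ B = S ∧
      isLeafPathCollection T A ∧ isLeafPathCollection T B

/-!
Write `w = ½𝟙_H`, `w' = ½𝟙_{H'}` and `D = H △ H'`. If `D` splits as `A ⊔ B` into nonempty
collections of leaf-paths, then `½𝟙_{H △ A}` and `½𝟙_{H' △ A}` are points of `P_T` off the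
segment `[w, w']` whose midpoint `(w + w') / 2` lies on it, so the segment is not a face.

Conversely, if a point of `[w, w']` lies inside a chord `[x₁, x₂]` of `P_T`, then `x₁` satisfies
with equality every inequality valid on `P_T` that is tight at both `w` and `w'`. Such a point `y`
vanishes off `H ∪ H'`, equals `1/2` on `H ∩ H'`, and at an internal node where two edges of `D`
meet, a tight triangle inequality forces `y_e` (for `e ∈ H \ H'`), resp. `1/2 - y_e` (for
`e ∈ H' \ H`), to agree on them. This quantity is therefore constant on the single leaf-path `D`,
which places `y` on the segment.
-/

section Convex

variable (𝕜 : Type*) {E : Type*} [Field 𝕜] [LinearOrder 𝕜] [AddCommGroup E] [Module 𝕜 E]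

def OnSupportingHyperplanesThrough (A : Set E) (z₁ z₂ y : E) : Prop :=
  ∀ (ℓ : E →ₗ[𝕜] 𝕜) (r : 𝕜), (∀ z ∈ A, ℓ z ≤ r) → ℓ z₁ = r → ℓ z₂ = r → ℓ y = r

variable {𝕜} [IsStrictOrderedRing 𝕜]

lemma OnSupportingHyperplanesThrough.of_mem_openSegment {A : Set E} {z₁ z₂ x₁ x₂ x : E}
    (hx₁ : x₁ ∈ A) (hx₂ : x₂ ∈ A) (hx : x ∈ segment 𝕜 z₁ z₂)
    (hxo : x ∈ openSegment 𝕜 x₁ x₂) : OnSupportingHyperplanesThrough 𝕜 A z₁ z₂ x₁ := by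
  intro ℓ r hA h₁ h₂
  obtain ⟨c, d, -, -, hcd, rfl⟩ := hx
  obtain ⟨a, b, ha, hb, hab, hx⟩ := hxo
  have hsum : a * ℓ x₁ + b * ℓ x₂ = r := by
    have := congrArg ℓ hx
    simp only [map_add, map_smul, smul_eq_mul, h₁, h₂] at this
    rw [this, ← add_mul, hcd, one_mul]
  refine le_antisymm (hA x₁ hx₁) (not_lt.1 fun hlt => ?_)
  have h₁r : a * ℓ x₁ < a * r := mul_lt_mul_of_pos_left hlt ha
  have h₂r : b * ℓ x₂ ≤ b * r := mul_le_mul_of_nonneg_left (hA x₂ hx₂) hb.le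
  have hr : a * r + b * r = r := by rw [← add_mul, hab, one_mul]
  linarith

lemma isExtreme_segment_of_onSupportingHyperplanesThrough {A : Set E} {z₁ z₂ : E}
    (hA : segment 𝕜 z₁ z₂ ⊆ A)
    (h : ∀ y ∈ A, OnSupportingHyperplanesThrough 𝕜 A z₁ z₂ y → y ∈ segment 𝕜 z₁ z₂) :
    IsExtreme 𝕜 A (segment 𝕜 z₁ z₂) :=
  ⟨hA, fun _ hx₁ _ hx₂ _ hx hxo => h _ hx₁ (.of_mem_openSegment hx₁ hx₂ hx hxo)⟩

end Convex

section HalfIndicator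

variable {V : Type*} [Fintype V] [DecidableEq V]

lemma halfIndicator_injective : Function.Injective (halfIndicator (V := V)) := by
  intro H H' h
  ext e
  have := congrFun h e
  by_cases he : e ∈ H <;> by_cases he' : e ∈ H' <;> simp_all [halfIndicator]

lemma eq_or_eq_of_halfIndicator_mem_segment {H H' K : Finset (Sym2 V)}
    (hK : halfIndicator K ∈ segment ℝ (halfIndicator H) (halfIndicator H')) :
    K = H ∨ K = H' := by
  obtain ⟨a, b, ha, hb, hab, hK⟩ := hK
  rcases ha.eq_or_lt with rfl | ha
  · right
    apply halfIndicator_injective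
    rw [← hK, zero_smul, zero_add, show b = 1 by linarith, one_smul]
  rcases hb.eq_or_lt with rfl | hb
  · left
    apply halfIndicator_injective
    rw [← hK, zero_smul, add_zero, show a = 1 by linarith, one_smul]
  -- a strict mixture takes values strictly between `0` and `1/2` on `H △ H'`
  left
  ext e
  have := congrFun hK e
  by_cases he : e ∈ K <;> by_cases hH : e ∈ H <;> by_cases hH' : e ∈ H' <;>
    simp [halfIndicator, he, hH, hH'] at this ⊢ <;> linarith

lemma halfIndicator_symmDiff_add_halfIndicator_symmDiff {H H' A : Finset (Sym2 V)}
    (hA : A ⊆ symmDiff H H') :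
    halfIndicator (symmDiff H A) + halfIndicator (symmDiff H' A) =
      halfIndicator H + halfIndicator H' := by
  funext e
  have hA := @hA e
  by_cases he : e ∈ A <;> by_cases hH : e ∈ H <;> by_cases hH' : e ∈ H' <;>
    simp_all [halfIndicator, Finset.mem_symmDiff]

end HalfIndicator

section InternalNode

variable {V : Type*} [Fintype V] [DecidableEq V] {T : SimpleGraph V} [DecidableRel T.Adj]

lemma filter_mem_incidenceFinset {H : Finset (Sym2 V)} (hH : H ⊆ T.edgeFinset) (v : V) :
    (T.incidenceFinset v).filter (fun e => e ∈ H) = H.filter (fun e => v ∈ e) := by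
  ext e
  simp only [SimpleGraph.incidenceFinset_eq_filter, Finset.mem_filter]
  exact ⟨fun ⟨⟨_, hv⟩, he⟩ => ⟨he, hv⟩, fun ⟨he, hv⟩ => ⟨⟨hH he, hv⟩, he⟩⟩

lemma degree_eq_three_of_mem_of_mem (hdeg : ∀ v : V, T.degree v = 1 ∨ T.degree v = 3)
    {v : V} {e f : Sym2 V} (he : e ∈ T.edgeFinset) (hf : f ∈ T.edgeFinset) (hve : v ∈ e)
    (hvf : v ∈ f) (hef : e ≠ f) : T.degree v = 3 := by
  have hsub : ({e, f} : Finset (Sym2 V)) ⊆ T.incidenceFinset v := by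
    simp only [Finset.insert_subset_iff, Finset.singleton_subset_iff,
      SimpleGraph.incidenceFinset_eq_filter, Finset.mem_filter]
    exact ⟨⟨he, hve⟩, hf, hvf⟩
  have := Finset.card_le_card hsub
  rw [Finset.card_pair hef, SimpleGraph.card_incidenceFinset_eq_degree] at this
  rcases hdeg v with h | h <;> omega

lemma exists_incidenceFinset_eq_triple {v : V} (hv : T.degree v = 3) {e f : Sym2 V}
    (he : e ∈ T.incidenceFinset v) (hf : f ∈ T.incidenceFinset v) (hef : e ≠ f) :
    ∃ g, e ≠ g ∧ f ≠ g ∧ T.incidenceFinset v = {e, f, g} := by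
  have hf' : f ∈ (T.incidenceFinset v).erase e := Finset.mem_erase.2 ⟨hef.symm, hf⟩
  have hcard : (((T.incidenceFinset v).erase e).erase f).card = 1 := by
    rw [Finset.card_erase_of_mem hf', Finset.card_erase_of_mem he,
      SimpleGraph.card_incidenceFinset_eq_degree, hv]
  obtain ⟨g, hg⟩ := Finset.card_eq_one.1 hcard
  have hgmem : g ∈ ((T.incidenceFinset v).erase e).erase f := hg ▸ Finset.mem_singleton_self g
  refine ⟨g, fun h => ?_, fun h => ?_, ?_⟩
  · simp [← h] at hgmem
  · simp [← h] at hgmem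
  · rw [← Finset.insert_erase he, ← Finset.insert_erase hf', hg]

lemma isLeafPathCollection.mem_iff {H : Finset (Sym2 V)} (hH : isLeafPathCollection T H)
    {v : V} (hv : T.degree v = 3) {e f g : Sym2 V} (hef : e ≠ f) (heg : e ≠ g) (hfg : f ≠ g)
    (hI : T.incidenceFinset v = {e, f, g}) : g ∈ H ↔ (e ∈ H ↔ f ∉ H) := by
  have hcard := hH.2 v hv
  rw [← filter_mem_incidenceFinset hH.1, hI] at hcard
  by_cases he : e ∈ H <;> by_cases hf : f ∈ H <;> by_cases hg : g ∈ H <;>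
    simp [Finset.filter_insert, Finset.filter_singleton, he, hf, hg, hef, heg, hfg] at hcard ⊢

end InternalNode

lemma Finset.card_symmDiff_eq_zero_or_two {α : Type*} [DecidableEq α] {A B S : Finset α}
    (hA : A ⊆ S) (hB : B ⊆ S) (hS : S.card = 3) (hA₂ : A.card = 0 ∨ A.card = 2)
    (hB₂ : B.card = 0 ∨ B.card = 2) :
    (symmDiff A B).card = 0 ∨ (symmDiff A B).card = 2 := by
  rw [symmDiff_eq_sup_sdiff_inf, Finset.sup_eq_union, Finset.inf_eq_inter,
    Finset.card_sdiff_of_subset (Finset.inter_subset_left.trans Finset.subset_union_left)]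
  have hunion := Finset.card_union_add_card_inter A B
  have hle₃ := Finset.card_le_card (Finset.union_subset hA hB)
  have hleB := Finset.card_le_card (Finset.inter_subset_right (s₁ := A) (s₂ := B))
  omega

section Polytope

variable {V : Type*} [Fintype V] [DecidableEq V] {T : SimpleGraph V} [DecidableRel T.Adj]

lemma memP.le_add {y : Sym2 V → ℝ} (hy : memP T y) {v : V} (hv : T.degree v = 3)
    {a b c : Sym2 V} (hab : a ≠ b) (hac : a ≠ c) (hbc : b ≠ c)
    (hI : T.incidenceFinset v = {a, b, c}) : y a ≤ y b + y c := by
  have := (hy.2.1 v hv).1 a (hI ▸ Finset.mem_insert_self a _)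
  rwa [hI, Finset.erase_insert (by simp [hab, hac]), Finset.sum_pair hbc] at this

lemma memP.add_add_le_one {y : Sym2 V → ℝ} (hy : memP T y) {v : V} (hv : T.degree v = 3)
    {a b c : Sym2 V} (hab : a ≠ b) (hac : a ≠ c) (hbc : b ≠ c)
    (hI : T.incidenceFinset v = {a, b, c}) : y a + y b + y c ≤ 1 := by
  have := (hy.2.1 v hv).2
  rwa [hI, Finset.sum_insert (by simp [hab, hac]), Finset.sum_pair hbc, ← add_assoc] at this

lemma memP.apply_mem_Icc (hdeg : ∀ v : V, T.degree v = 1 ∨ T.degree v = 3)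
    {y : Sym2 V → ℝ} (hy : memP T y) (e : Sym2 V) : y e ∈ Set.Icc 0 (1 / 2) := by
  by_cases he : e ∈ T.edgeSet
  swap
  · simp [hy.1 e he]
  by_cases hleaf : ∀ v ∈ e, T.degree v = 1
  · exact hy.2.2 e he hleaf
  push Not at hleaf
  obtain ⟨v, hve, hv1⟩ := hleaf
  have hv : T.degree v = 3 := (hdeg v).resolve_left hv1
  have heI : e ∈ T.incidenceFinset v := (T.mem_incidenceFinset v e).2 ⟨he, hve⟩
  obtain ⟨f, hfI, hfe⟩ := Finset.exists_mem_ne (s := T.incidenceFinset v)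
    (by rw [T.card_incidenceFinset_eq_degree v, hv]; norm_num) e
  obtain ⟨g, heg, hfg, hI⟩ := exists_incidenceFinset_eq_triple hv heI hfI hfe.symm
  have hef := hfe.symm
  have h₁ := hy.le_add hv hef heg hfg hI
  have h₂ := hy.le_add hv hfe hfg heg (by rw [hI, Finset.insert_comm])
  have h₃ := hy.le_add hv heg.symm hfg.symm hef
    (by rw [hI, Finset.pair_comm, Finset.insert_comm])
  have h₄ := hy.add_add_le_one hv hef heg hfg hI
  constructor <;> linarith

lemma convex_memP : Convex ℝ {w : Sym2 V → ℝ | memP T w} := by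
  intro x hx y hy a b ha hb hab
  change memP T x at hx
  change memP T y at hy
  change memP T (a • x + b • y)
  refine ⟨fun e he => ?_, fun v hv => ⟨fun c hc => ?_, ?_⟩, fun e he hleaf => ⟨?_, ?_⟩⟩
  · simp [hx.1 e he, hy.1 e he]
  · have hx' := mul_le_mul_of_nonneg_left ((hx.2.1 v hv).1 c hc) ha
    have hy' := mul_le_mul_of_nonneg_left ((hy.2.1 v hv).1 c hc) hb
    simp only [Pi.add_apply, Pi.smul_apply, smul_eq_mul, Finset.sum_add_distrib,
      ← Finset.mul_sum]
    linarith
  · have hx' := mul_le_mul_of_nonneg_left (hx.2.1 v hv).2 ha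
    have hy' := mul_le_mul_of_nonneg_left (hy.2.1 v hv).2 hb
    simp only [Pi.add_apply, Pi.smul_apply, smul_eq_mul, Finset.sum_add_distrib,
      ← Finset.mul_sum]
    linarith
  · have hx' := mul_nonneg ha (hx.2.2 e he hleaf).1
    have hy' := mul_nonneg hb (hy.2.2 e he hleaf).1
    simp only [Pi.add_apply, Pi.smul_apply, smul_eq_mul]
    linarith
  · have hx' := mul_le_mul_of_nonneg_left (hx.2.2 e he hleaf).2 ha
    have hy' := mul_le_mul_of_nonneg_left (hy.2.2 e he hleaf).2 hb
    simp only [Pi.add_apply, Pi.smul_apply, smul_eq_mul]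
    linarith

lemma sum_halfIndicator (H s : Finset (Sym2 V)) :
    ∑ e ∈ s, halfIndicator H e = (s.filter (fun e => e ∈ H)).card / 2 := by
  simp [halfIndicator, Finset.filter_mem_eq_inter, div_eq_mul_inv]

lemma memP_halfIndicator {H : Finset (Sym2 V)} (hH : isLeafPathCollection T H) :
    memP T (halfIndicator H) := by
  refine ⟨fun e he => ?_, fun v hv => ?_, fun e _ _ => ?_⟩
  · have : e ∉ H := fun h => he (SimpleGraph.mem_edgeFinset.1 (hH.1 h))
    simp [halfIndicator, this]
  · have hcard := hH.2 v hv
    rw [← filter_mem_incidenceFinset hH.1] at hcard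
    refine ⟨fun a ha => ?_, ?_⟩
    · by_cases haH : a ∈ H
      · have hmem : a ∈ (T.incidenceFinset v).filter (fun e => e ∈ H) :=
          Finset.mem_filter.2 ⟨ha, haH⟩
        have hcard₂ : ((T.incidenceFinset v).filter (fun e => e ∈ H)).card = 2 :=
          hcard.resolve_left (Finset.card_ne_zero_of_mem hmem)
        rw [sum_halfIndicator, Finset.filter_erase, Finset.card_erase_of_mem hmem, hcard₂]
        simp [halfIndicator, haH]
      · simp only [halfIndicator, haH, if_false]
        exact Finset.sum_nonneg fun e _ => by split_ifs <;> norm_num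
    · rw [sum_halfIndicator]
      rcases hcard with h | h <;> rw [h] <;> norm_num
  · unfold halfIndicator
    split_ifs <;> norm_num

lemma isLeafPathCollection.symmDiff {H H' : Finset (Sym2 V)} (hH : isLeafPathCollection T H)
    (hH' : isLeafPathCollection T H') : isLeafPathCollection T (symmDiff H H') := by
  refine ⟨fun e he => ?_, fun v hv => ?_⟩
  · rcases Finset.mem_symmDiff.1 he with ⟨h, -⟩ | ⟨h, -⟩
    exacts [hH.1 h, hH'.1 h]
  have hfilter : (_root_.symmDiff H H').filter (fun e => v ∈ e) =
      _root_.symmDiff (H.filter (fun e => v ∈ e)) (H'.filter (fun e => v ∈ e)) := by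
    ext e
    simp only [Finset.mem_filter, Finset.mem_symmDiff]
    tauto
  rw [hfilter]
  refine Finset.card_symmDiff_eq_zero_or_two ?_ ?_
    ((T.card_incidenceFinset_eq_degree v).trans hv) (hH.2 v hv) (hH'.2 v hv)
  · rw [← filter_mem_incidenceFinset hH.1]; exact Finset.filter_subset _ _
  · rw [← filter_mem_incidenceFinset hH'.1]; exact Finset.filter_subset _ _

lemma isLeafPathCollection.filter {D : Finset (Sym2 V)} (hD : isLeafPathCollection T D)
    (p : Sym2 V → Prop) [DecidablePred p]
    (hp : ∀ e ∈ D, ∀ f ∈ D, ∀ v, v ∈ e → v ∈ f → (p e ↔ p f)) :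
    isLeafPathCollection T (D.filter p) := by
  refine ⟨(Finset.filter_subset _ _).trans hD.1, fun v hv => ?_⟩
  rw [Finset.filter_comm]
  by_cases h : ∃ e ∈ D.filter (fun e => v ∈ e), p e
  · obtain ⟨e, he, hpe⟩ := h
    rw [Finset.filter_true_of_mem fun f hf => ?_]
    · exact hD.2 v hv
    · rw [Finset.mem_filter] at he hf
      exact (hp e he.1 f hf.1 v he.2 hf.2).1 hpe
  · push Not at h
    left
    simpa [Finset.filter_eq_empty_iff] using h

lemma isSingleLeafPath.apply_eq_apply {α : Type*} {S : Finset (Sym2 V)}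
    (hS : isSingleLeafPath T S) {φ : Sym2 V → α}
    (hφ : ∀ e ∈ S, ∀ f ∈ S, ∀ v, v ∈ e → v ∈ f → φ e = φ f) {e f : Sym2 V} (he : e ∈ S)
    (hf : f ∈ S) : φ e = φ f := by
  by_contra hne
  have hclosed : ∀ e' ∈ S, ∀ f' ∈ S, ∀ v, v ∈ e' → v ∈ f' → (φ e' = φ e ↔ φ f' = φ e) :=
    fun e' he' f' hf' v hve' hvf' => by rw [hφ e' he' f' hf' v hve' hvf']
  refine hS.2.2 ⟨S.filter (fun g => φ g = φ e), S.filter (fun g => ¬ φ g = φ e),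
    ⟨e, Finset.mem_filter.2 ⟨he, rfl⟩⟩, ⟨f, Finset.mem_filter.2 ⟨hf, Ne.symm hne⟩⟩,
    Finset.disjoint_filter_filter_not _ _ _, Finset.filter_union_filter_not_eq _ _,
    hS.1.filter _ hclosed, hS.1.filter _ fun e' he' f' hf' v hve' hvf' => ?_⟩
  exact not_congr (hclosed e' he' f' hf' v hve' hvf')

end Polytope

section Face

variable {V : Type*} [Fintype V] [DecidableEq V] {T : SimpleGraph V} [DecidableRel T.Adj]
  {H H' : Finset (Sym2 V)} {y : Sym2 V → ℝ}

lemma OnSupportingHyperplanesThrough.apply_eq_zero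
    (hdeg : ∀ v : V, T.degree v = 1 ∨ T.degree v = 3)
    (hy : OnSupportingHyperplanesThrough ℝ {z | memP T z} (halfIndicator H) (halfIndicator H') y)
    {e : Sym2 V} (he : e ∉ H) (he' : e ∉ H') : y e = 0 := by
  have := hy (-.proj e) 0 (fun z hz => by simpa using (memP.apply_mem_Icc hdeg hz e).1)
    (by simp [halfIndicator, he]) (by simp [halfIndicator, he'])
  simpa using this

lemma OnSupportingHyperplanesThrough.apply_eq_half
    (hdeg : ∀ v : V, T.degree v = 1 ∨ T.degree v = 3)
    (hy : OnSupportingHyperplanesThrough ℝ {z | memP T z} (halfIndicator H) (halfIndicator H') y)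
    {e : Sym2 V} (he : e ∈ H) (he' : e ∈ H') : y e = 1 / 2 :=
  hy (.proj e) (1 / 2) (fun z hz => (memP.apply_mem_Icc hdeg hz e).2)
    (by simp [halfIndicator, he]) (by simp [halfIndicator, he'])

lemma OnSupportingHyperplanesThrough.apply_eq_add
    (hy : OnSupportingHyperplanesThrough ℝ {z | memP T z} (halfIndicator H) (halfIndicator H') y)
    {v : V} (hv : T.degree v = 3) {a b c : Sym2 V} (hab : a ≠ b) (hac : a ≠ c) (hbc : b ≠ c)
    (hI : T.incidenceFinset v = {a, b, c})
    (hw : halfIndicator H a = halfIndicator H b + halfIndicator H c)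
    (hw' : halfIndicator H' a = halfIndicator H' b + halfIndicator H' c) :
    y a = y b + y c := by
  have := hy (.proj a - .proj b - .proj c) 0
    (fun z hz => by simpa [sub_sub] using memP.le_add hz hv hab hac hbc hI)
    (by simp [hw]) (by simp [hw'])
  simp only [LinearMap.sub_apply, LinearMap.coe_proj, Function.eval] at this
  linarith

/-- On `H △ H'`, the point `(2 * t) • halfIndicator H + (1 - 2 * t) • halfIndicator H'` of the
segment has `segmentCoord H y = t`. -/
def segmentCoord (H : Finset (Sym2 V)) (y : Sym2 V → ℝ) (e : Sym2 V) : ℝ :=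
  if e ∈ H then y e else 1 / 2 - y e

lemma OnSupportingHyperplanesThrough.segmentCoord_eq
    (hdeg : ∀ v : V, T.degree v = 1 ∨ T.degree v = 3) (hH : isLeafPathCollection T H)
    (hH' : isLeafPathCollection T H')
    (hy : OnSupportingHyperplanesThrough ℝ {z | memP T z} (halfIndicator H) (halfIndicator H') y)
    {e f : Sym2 V} (he : e ∈ symmDiff H H') (hf : f ∈ symmDiff H H') {v : V} (hve : v ∈ e)
    (hvf : v ∈ f) : segmentCoord H y e = segmentCoord H y f := by
  obtain rfl | hef := eq_or_ne e f
  · rfl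
  have hD := hH.symmDiff hH'
  have hv := degree_eq_three_of_mem_of_mem hdeg (hD.1 he) (hD.1 hf) hve hvf hef
  obtain ⟨g, heg, hfg, hI⟩ := exists_incidenceFinset_eq_triple hv
    ((T.mem_incidenceFinset v e).2 ⟨SimpleGraph.mem_edgeFinset.1 (hD.1 he), hve⟩)
    ((T.mem_incidenceFinset v f).2 ⟨SimpleGraph.mem_edgeFinset.1 (hD.1 hf), hvf⟩) hef
  have hI' : T.incidenceFinset v = {g, e, f} := by rw [hI, Finset.pair_comm, Finset.insert_comm]
  have hgH := hH.mem_iff hv hef heg hfg hI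
  have hgH' := hH'.mem_iff hv hef heg hfg hI
  unfold segmentCoord
  -- when `e` and `f` lie on the same side, the third edge avoids `H ∪ H'` and the triangle
  -- inequality at `e` is tight; otherwise it lies in `H ∩ H'` and the one at it is tight
  rcases Finset.mem_symmDiff.1 he with ⟨heH, heH'⟩ | ⟨heH', heH⟩ <;>
    rcases Finset.mem_symmDiff.1 hf with ⟨hfH, hfH'⟩ | ⟨hfH', hfH⟩ <;>
    simp only [heH, heH', hfH, hfH', if_true, if_false, iff_true, iff_false,
      not_true_eq_false, not_false_eq_true] at hgH hgH' ⊢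
  · linarith [hy.apply_eq_zero hdeg hgH hgH', hy.apply_eq_add hv hef heg hfg hI
      (by simp [halfIndicator, heH, hfH, hgH]) (by simp [halfIndicator, heH', hfH', hgH'])]
  · linarith [hy.apply_eq_half hdeg hgH hgH', hy.apply_eq_add hv heg.symm hfg.symm hef hI'
      (by simp [halfIndicator, heH, hfH, hgH]) (by simp [halfIndicator, heH', hfH', hgH'])]
  · linarith [hy.apply_eq_half hdeg hgH hgH', hy.apply_eq_add hv heg.symm hfg.symm hef hI'
      (by simp [halfIndicator, heH, hfH, hgH]) (by simp [halfIndicator, heH', hfH', hgH'])]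
  · linarith [hy.apply_eq_zero hdeg hgH hgH', hy.apply_eq_add hv hef heg hfg hI
      (by simp [halfIndicator, heH, hfH, hgH]) (by simp [halfIndicator, heH', hfH', hgH'])]

end Face

section Adjacency

variable {V : Type*} [Fintype V] [DecidableEq V] {T : SimpleGraph V} [DecidableRel T.Adj]
  {H H' : Finset (Sym2 V)}

lemma mem_segment_of_onSupportingHyperplanesThrough
    (hdeg : ∀ v : V, T.degree v = 1 ∨ T.degree v = 3) (hH : isLeafPathCollection T H)
    (hH' : isLeafPathCollection T H') (hsingle : isSingleLeafPath T (symmDiff H H'))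
    {y : Sym2 V → ℝ} (hymem : memP T y)
    (hy : OnSupportingHyperplanesThrough ℝ {z | memP T z} (halfIndicator H) (halfIndicator H') y) :
    y ∈ segment ℝ (halfIndicator H) (halfIndicator H') := by
  obtain ⟨e₀, he₀⟩ := hsingle.2.1
  set t := segmentCoord H y e₀
  have hconst : ∀ e ∈ symmDiff H H', segmentCoord H y e = t := fun e he =>
    hsingle.apply_eq_apply (fun _ he _ hf _ hve hvf => hy.segmentCoord_eq hdeg hH hH' he hf hve hvf)
      he he₀
  have ht : 0 ≤ t ∧ t ≤ 1 / 2 := by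
    have := memP.apply_mem_Icc hdeg hymem e₀
    simp only [t, segmentCoord]
    split_ifs <;> constructor <;> linarith [this.1, this.2]
  refine ⟨2 * t, 1 - 2 * t, by linarith, by linarith, by ring, funext fun e => ?_⟩
  by_cases heH : e ∈ H <;> by_cases heH' : e ∈ H'
  · simp [halfIndicator, heH, heH', hy.apply_eq_half hdeg heH heH']
    ring
  · have := hconst e (Finset.mem_symmDiff.2 (Or.inl ⟨heH, heH'⟩))
    simp only [segmentCoord, if_pos heH] at this
    simp [halfIndicator, heH, heH', this]
    ring
  · have := hconst e (Finset.mem_symmDiff.2 (Or.inr ⟨heH', heH⟩))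
    simp only [segmentCoord, if_neg heH] at this
    simp [halfIndicator, heH, heH']
    linarith
  · simp [halfIndicator, heH, heH', hy.apply_eq_zero hdeg heH heH']

lemma isExtreme_segment_of_isSingleLeafPath (hdeg : ∀ v : V, T.degree v = 1 ∨ T.degree v = 3)
    (hH : isLeafPathCollection T H) (hH' : isLeafPathCollection T H')
    (hsingle : isSingleLeafPath T (symmDiff H H')) :
    IsExtreme ℝ {w : Sym2 V → ℝ | memP T w} (segment ℝ (halfIndicator H) (halfIndicator H')) :=
  isExtreme_segment_of_onSupportingHyperplanesThrough
    (convex_memP.segment_subset (memP_halfIndicator hH) (memP_halfIndicator hH'))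
    fun _ hymem hy => mem_segment_of_onSupportingHyperplanesThrough hdeg hH hH' hsingle hymem hy

lemma isSingleLeafPath_of_isExtreme_segment (hH : isLeafPathCollection T H)
    (hH' : isLeafPathCollection T H') (hne : H ≠ H')
    (hext : IsExtreme ℝ {w : Sym2 V → ℝ | memP T w}
      (segment ℝ (halfIndicator H) (halfIndicator H'))) :
    isSingleLeafPath T (symmDiff H H') := by
  refine ⟨hH.symmDiff hH', ?_, ?_⟩
  · rwa [Finset.nonempty_iff_ne_empty, ← Finset.bot_eq_empty, Ne, symmDiff_eq_bot]
  rintro ⟨A, B, hA, ⟨f, hfB⟩, hAB, hABD, hlA, -⟩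
  have hAD : A ⊆ symmDiff H H' := hABD ▸ Finset.subset_union_left
  -- the vertices `½𝟙_{H △ A}` and `½𝟙_{H' △ A}` have the same midpoint as `w` and `w'`
  have hseg : (1 / 2 : ℝ) • (halfIndicator H + halfIndicator H') ∈
      segment ℝ (halfIndicator H) (halfIndicator H') :=
    ⟨1 / 2, 1 / 2, by norm_num, by norm_num, by norm_num, (smul_add _ _ _).symm⟩
  have hmid : (1 / 2 : ℝ) • (halfIndicator H + halfIndicator H') ∈
      openSegment ℝ (halfIndicator (symmDiff H A)) (halfIndicator (symmDiff H' A)) :=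
    ⟨1 / 2, 1 / 2, by norm_num, by norm_num, by norm_num,
      by rw [← smul_add, halfIndicator_symmDiff_add_halfIndicator_symmDiff hAD]⟩
  rcases eq_or_eq_of_halfIndicator_mem_segment (hext.left_mem_of_mem_openSegment
      (memP_halfIndicator (hH.symmDiff hlA)) (memP_halfIndicator (hH'.symmDiff hlA)) hseg hmid)
    with h | h
  · exact hA.ne_empty (symmDiff_eq_left.1 h)
  · have hAeq : A = symmDiff H H' := by rw [← h, symmDiff_symmDiff_cancel_left]
    exact Finset.disjoint_left.1 hAB (hAeq ▸ hABD ▸ Finset.mem_union_right A hfB) hfB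

end Adjacency

theorem stmt9_general {V : Type*} [Fintype V] [DecidableEq V] (T : SimpleGraph V)
    [DecidableRel T.Adj]
    (hdeg : ∀ v : V, T.degree v = 1 ∨ T.degree v = 3)
    (H H' : Finset (Sym2 V)) (hH : isLeafPathCollection T H)
    (hH' : isLeafPathCollection T H') (hne : halfIndicator H ≠ halfIndicator H') :
    IsExtreme ℝ {w : Sym2 V → ℝ | memP T w}
        (segment ℝ (halfIndicator H) (halfIndicator H'))
      ↔ isSingleLeafPath T (symmDiff H H') :=
  ⟨isSingleLeafPath_of_isExtreme_segment hH hH' (fun h => hne (h ▸ rfl)),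
    isExtreme_segment_of_isSingleLeafPath hdeg hH hH'⟩

/-- Theorem 7.3: two distinct vertices `(1/2)𝟙_{H}` and `(1/2)𝟙_{H'}` of `P_T` are adjacent
(the segment between them is a face, i.e. an extreme subset, of `P_T`) if and only if the
symmetric difference `H △ H'` is a single leaf-path. -/
theorem stmt9 {V : Type*} [Fintype V] [DecidableEq V] (T : SimpleGraph V)
    [DecidableRel T.Adj] (hconn : T.Connected) (hacyc : T.IsAcyclic)
    (hdeg : ∀ v : V, T.degree v = 1 ∨ T.degree v = 3)
    (H H' : Finset (Sym2 V)) (hH : isLeafPathCollection T H)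
    (hH' : isLeafPathCollection T H') (hne : halfIndicator H ≠ halfIndicator H') :
    IsExtreme ℝ {w : Sym2 V → ℝ | memP T w}
        (segment ℝ (halfIndicator H) (halfIndicator H'))
      ↔ isSingleLeafPath T (symmDiff H H') :=
  stmt9_general T hdeg H H' hH hH' hne
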